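/- arXiv:2204.06206 — 5 statements merged into one kernel-verified Lean document; each statement's English description precedes it below -/
import Mathlib

section
/- Let Y be an m×n real matrix with m ≤ n and let 0 < η < ‖Y‖_F². Let w₁, …, w_m be weights with 0 < w₁ ≤ w₂ ≤ … ≤ w_m, and let f(X) = Σᵢ wᵢ·σ_{X,i} be the weighted nuclear norm (the standard nuclear norm is the case all wᵢ = 1). If X† is a global minimizer of f(X) over the constraint set {X : ‖Y − X‖_F² ≤ η}, then ‖Y − X†‖_F² = η, i.e., every global minimizer lies on the boundary of the constraint. -/
/-- The singular values of an `m×n` real matrix `X` (`m ≤ n`), in non-increasing order: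
`singularValues hmn X i` is the square root of the `(i+1)`-st largest eigenvalue of the
positive semidefinite matrix `XᵀX` (over `ℝ`, `Xᴴ = Xᵀ`). -/
noncomputable def singularValues {m n : ℕ} (hmn : m ≤ n) (X : Matrix (Fin m) (Fin n) ℝ) :
    Fin m → ℝ := fun i =>
  let ev : Fin n → ℝ := (Matrix.isHermitian_conjTranspose_mul_self X).eigenvalues
  Real.sqrt ((ev ∘ Tuple.sort ev) (Fin.rev (Fin.castLE hmn i)))

/-- Squared Frobenius norm of a real matrix: sum of squares of the entries. -/
def frobSq {m n : ℕ} (A : Matrix (Fin m) (Fin n) ℝ) : ℝ := ∑ i, ∑ j, (A i j) ^ 2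

/-!
If `X†` were strictly inside the constraint set, then by continuity `t • X†` would still be
feasible for some `0 ≤ t < 1`. Singular values are positively homogeneous, so the weighted nuclear
norm of `t • X†` is `t` times that of `X†`, which is strictly smaller because `X† ≠ 0` (the
constraint excludes `0` since `η < ‖Y‖_F²`) and the weights are positive.
-/

namespace Tuple

variable {α : Type*} [LinearOrder α] {n : ℕ}

theorem comp_sort_eq_comp_sort_of_perm {f g : Fin n → α}
    (h : (List.ofFn f).Perm (List.ofFn g)) : f ∘ sort f = g ∘ sort g := by
  have hsorted (f : Fin n → α) : (List.ofFn (f ∘ sort f)).SortedLE :=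
    List.sortedLE_ofFn_iff.mpr (monotone_sort f)
  refine List.ofFn_injective (List.Perm.eq_of_sortedLE (hsorted f) (hsorted g) ?_)
  exact ((sort f).ofFn_comp_perm f).trans (h.trans ((sort g).ofFn_comp_perm g).symm)

theorem comp_sort_comp_of_monotone {β : Type*} [LinearOrder β] {φ : α → β} (hφ : Monotone φ)
    (f : Fin n → α) :
    (φ ∘ f) ∘ sort (φ ∘ f) = φ ∘ f ∘ sort f :=
  ((comp_sort_eq_comp_iff_monotone (f := φ ∘ f)).mpr (hφ.comp (monotone_sort f))).symm

theorem apply_le_comp_sort (f : Fin n → α) {j : Fin n} (hj : ∀ k, k ≤ j) (i : Fin n) :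
    f i ≤ (f ∘ sort f) j := by
  simpa using monotone_sort f (hj ((sort f).symm i))

end Tuple

namespace Matrix.IsHermitian

variable {𝕜 : Type*} [RCLike 𝕜] {n : ℕ} {A B : Matrix (Fin n) (Fin n) 𝕜}

theorem ofFn_eigenvalues_perm_of_eq_cfc (hA : A.IsHermitian) (hB : B.IsHermitian)
    {f : ℝ → ℝ} (hBA : B = cfc f A) :
    (List.ofFn hB.eigenvalues).Perm (List.ofFn (f ∘ hA.eigenvalues)) := by
  have hcharpoly : B.charpoly = ∏ i, (Polynomial.X - Polynomial.C (f (hA.eigenvalues i) : 𝕜)) :=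
    hBA ▸ hA.charpoly_cfc_eq f
  have hroots := hB.roots_charpoly_eq_eigenvalues
  rw [hcharpoly, Polynomial.roots_prod _ _ (by
    simp [Finset.prod_ne_zero_iff, Polynomial.X_sub_C_ne_zero])] at hroots
  simp only [Polynomial.roots_X_sub_C, Multiset.bind_singleton, Fin.univ_val_map,
    Function.comp_apply, Multiset.coe_eq_coe] at hroots
  simpa only [Function.comp_def, List.map_ofFn, RCLike.ofReal_re] using (hroots.map RCLike.re).symm

end Matrix.IsHermitian

open Matrix Filter Topology

theorem singularValues_smul {m n : ℕ} (hmn : m ≤ n) (X : Matrix (Fin m) (Fin n) ℝ) {c : ℝ}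
    (hc : 0 ≤ c) : singularValues hmn (c • X) = c • singularValues hmn X := by
  have hA := isHermitian_conjTranspose_mul_self X
  have hcfc : (c • X)ᴴ * (c • X) = cfc (c ^ 2 * ·) (Xᴴ * X) := by
    rw [cfc_const_mul_id _ _ hA.isSelfAdjoint]
    simp [smul_smul, sq]
  have hsorted := (Tuple.comp_sort_eq_comp_sort_of_perm
    (hA.ofFn_eigenvalues_perm_of_eq_cfc (isHermitian_conjTranspose_mul_self (c • X)) hcfc)).trans
    (Tuple.comp_sort_comp_of_monotone (monotone_mul_left_of_nonneg (sq_nonneg c)) hA.eigenvalues)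
  funext i
  simp only [singularValues, Pi.smul_apply, smul_eq_mul]
  rw [hsorted, Function.comp_apply, Real.sqrt_mul (sq_nonneg c), Real.sqrt_sq hc]

theorem exists_singularValues_pos {m n : ℕ} (hmn : m ≤ n) {X : Matrix (Fin m) (Fin n) ℝ}
    (hX : X ≠ 0) : ∃ i, 0 < singularValues hmn X i := by
  obtain ⟨i, -⟩ : ∃ i j, X i j ≠ 0 := by
    contrapose! hX
    ext i j
    exact hX i j
  -- `⟨0, _⟩` indexes the largest eigenvalue of `XᴴX`
  refine ⟨⟨0, i.pos⟩, Real.sqrt_pos.mpr ?_⟩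
  have hA := isHermitian_conjTranspose_mul_self X
  set ev := hA.eigenvalues
  by_contra! htop
  have hev : ev = 0 := funext fun l => le_antisymm
    ((Tuple.apply_le_comp_sort ev (fun k => by rw [Fin.le_def]; simp; omega) l).trans htop)
    ((posSemidef_conjTranspose_mul_self X).eigenvalues_nonneg l)
  exact hX (conjTranspose_mul_self_eq_zero.mp (hA.eigenvalues_eq_zero_iff.mp hev))

theorem continuous_frobSq {m n : ℕ} : Continuous (frobSq : Matrix (Fin m) (Fin n) ℝ → ℝ) := by
  unfold frobSq
  fun_prop

theorem exists_lt_one_frobSq_sub_smul_lt {m n : ℕ} {Y X : Matrix (Fin m) (Fin n) ℝ} {η : ℝ}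
    (h : frobSq (Y - X) < η) : ∃ t : ℝ, 0 ≤ t ∧ t < 1 ∧ frobSq (Y - t • X) < η := by
  have hcont : Continuous fun t : ℝ => frobSq (Y - t • X) := continuous_frobSq.comp (by fun_prop)
  have hnear : ∀ᶠ t in 𝓝 (1 : ℝ), 0 ≤ t ∧ frobSq (Y - t • X) < η :=
    ((lt_mem_nhds zero_lt_one).mono fun _ => le_of_lt).and
      (hcont.tendsto 1 |>.eventually (gt_mem_nhds (by simpa using h)))
  obtain ⟨t, ⟨ht0, ht⟩, ht1⟩ :=
    ((hnear.filter_mono nhdsWithin_le_nhds).and (self_mem_nhdsWithin (s := Set.Iio 1))).exists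
  exact ⟨t, ht0, ht1, ht⟩

noncomputable def weightedNuclearNorm {m n : ℕ} (hmn : m ≤ n) (w : Fin m → ℝ)
    (X : Matrix (Fin m) (Fin n) ℝ) : ℝ :=
  ∑ i, w i * singularValues hmn X i

theorem weightedNuclearNorm_smul {m n : ℕ} (hmn : m ≤ n) (w : Fin m → ℝ)
    (X : Matrix (Fin m) (Fin n) ℝ) {c : ℝ} (hc : 0 ≤ c) :
    weightedNuclearNorm hmn w (c • X) = c * weightedNuclearNorm hmn w X := by
  simp only [weightedNuclearNorm, singularValues_smul hmn X hc, Pi.smul_apply, smul_eq_mul,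
    Finset.mul_sum, mul_left_comm]

theorem weightedNuclearNorm_pos {m n : ℕ} (hmn : m ≤ n) {w : Fin m → ℝ} (hw : ∀ i, 0 < w i)
    {X : Matrix (Fin m) (Fin n) ℝ} (hX : X ≠ 0) : 0 < weightedNuclearNorm hmn w X := by
  obtain ⟨i, hi⟩ := exists_singularValues_pos hmn hX
  exact Finset.sum_pos' (fun j _ => mul_nonneg (hw j).le (Real.sqrt_nonneg _))
    ⟨i, Finset.mem_univ i, mul_pos (hw i) hi⟩

theorem constrained_minimizer_on_boundary_general {m n : ℕ} (hmn : m ≤ n)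
    (Y : Matrix (Fin m) (Fin n) ℝ) (η : ℝ) (hηY : η < frobSq Y)
    (w : Fin m → ℝ) (hwpos : ∀ i, 0 < w i)
    (Xdag : Matrix (Fin m) (Fin n) ℝ) (hfeas : frobSq (Y - Xdag) ≤ η)
    (hmin : ∀ X : Matrix (Fin m) (Fin n) ℝ, frobSq (Y - X) ≤ η →
      (∑ i, w i * singularValues hmn Xdag i) ≤ ∑ i, w i * singularValues hmn X i) :
    frobSq (Y - Xdag) = η := by
  by_contra hne
  have hX : Xdag ≠ 0 := by
    rintro rfl
    rw [sub_zero] at hfeas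
    linarith
  obtain ⟨t, ht0, ht1, hfeas_t⟩ := exists_lt_one_frobSq_sub_smul_lt (hfeas.lt_of_ne hne)
  have hle : weightedNuclearNorm hmn w Xdag ≤ weightedNuclearNorm hmn w (t • Xdag) :=
    hmin _ hfeas_t.le
  rw [weightedNuclearNorm_smul hmn w Xdag ht0] at hle
  linarith [mul_lt_of_lt_one_left (weightedNuclearNorm_pos hmn hwpos hX) ht1]

/-- For `0 < η < ‖Y‖_F²` and positive non-decreasing weights, every global minimizer of
the weighted nuclear norm `f(X) = Σᵢ wᵢ σ_{X,i}` over `{X : ‖Y − X‖_F² ≤ η}` lies on the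
boundary: `‖Y − X†‖_F² = η`. -/
theorem constrained_minimizer_on_boundary {m n : ℕ} (hmn : m ≤ n)
    (Y : Matrix (Fin m) (Fin n) ℝ) (η : ℝ) (hη0 : 0 < η) (hηY : η < frobSq Y)
    (w : Fin m → ℝ) (hwpos : ∀ i, 0 < w i) (hwmono : Monotone w)
    (Xdag : Matrix (Fin m) (Fin n) ℝ) (hfeas : frobSq (Y - Xdag) ≤ η)
    (hmin : ∀ X : Matrix (Fin m) (Fin n) ℝ, frobSq (Y - X) ≤ η →
      (∑ i, w i * singularValues hmn Xdag i) ≤ ∑ i, w i * singularValues hmn X i) :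
    frobSq (Y - Xdag) = η :=
  constrained_minimizer_on_boundary_general hmn Y η hηY w hwpos Xdag hfeas hmin
end

section
/- Let σ₁ ≥ σ₂ ≥ … ≥ σ_m ≥ 0 be a non-increasing sequence of nonnegative reals and define φ(λ) = Σᵢ₌₁^m min(σᵢ², λ²) for λ ≥ 0. Let η satisfy 0 < η < Σᵢ₌₁^m σᵢ². Define b_j = j·σ_j² + Σ_{i=j+1}^m σᵢ² for j = 1, …, m and b_{m+1} = 0, and let k be an index with b_{k+1} < η ≤ b_k. Then λ* = √((η − Σ_{i=k+1}^m σᵢ²)/k) is positive and is the unique positive solution of the equation φ(λ) = η. -/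
/-!
With `t = λ²`, the discrepancy `Σᵢ min(σᵢ², t)` is nondecreasing in `t`, and strictly increasing
as long as `t` lies below some `σᵢ²`; since `η < Σᵢ σᵢ²`, any root lies in that range, so there
is at most one. The inequalities `b_{k+1} < η ≤ b_k` say exactly that `t* = (η − Σ_{i>k} σᵢ²)/k`
lies between `σ_{k+1}²` and `σ_k²`, where the discrepancy equals `k t + Σ_{i>k} σᵢ²`, which is `η`
at `t*`.
-/

open Finset

theorem antitoneOn_Iio_of_succ_le {α : Type*} [Preorder α] {f : ℕ → α} {m : ℕ}
    (hf : ∀ i, i + 1 < m → f (i + 1) ≤ f i) : AntitoneOn f (Set.Iio m) := by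
  intro i _ j hj hij
  induction j, hij using Nat.le_induction with
  | base => exact le_rfl
  | succ j hij ih => exact (hf j hj).trans (ih (Nat.lt_of_succ_lt hj))

noncomputable def discrepancy (σ : ℕ → ℝ) (m : ℕ) (t : ℝ) : ℝ :=
  ∑ i ∈ range m, min (σ i ^ 2) t

section Discrepancy

variable {σ : ℕ → ℝ} {m : ℕ} {s t : ℝ}

theorem discrepancy_lt_discrepancy {j : ℕ} (hj : j < m) (hsj : s < σ j ^ 2) (hst : s < t) :
    discrepancy σ m s < discrepancy σ m t :=
  sum_lt_sum (fun _ _ => min_le_min_left _ hst.le)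
    ⟨j, mem_range.2 hj, (min_eq_right hsj.le).trans_lt (lt_min hsj hst)⟩

theorem exists_lt_sq_of_discrepancy_lt (h : discrepancy σ m t < ∑ i ∈ range m, σ i ^ 2) :
    ∃ j < m, t < σ j ^ 2 := by
  by_contra! hle
  exact h.ne (sum_congr rfl fun i hi => min_eq_left (hle i (mem_range.1 hi)))

theorem eq_of_discrepancy_eq (hs : discrepancy σ m s < ∑ i ∈ range m, σ i ^ 2)
    (hst : discrepancy σ m s = discrepancy σ m t) : s = t := by
  obtain ⟨i, hi, hsi⟩ := exists_lt_sq_of_discrepancy_lt hs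
  obtain ⟨j, hj, htj⟩ := exists_lt_sq_of_discrepancy_lt (hst ▸ hs)
  rcases lt_trichotomy s t with h | h | h
  · exact absurd hst (discrepancy_lt_discrepancy hi hsi h).ne
  · exact h
  · exact absurd hst (discrepancy_lt_discrepancy hj htj h).ne'

theorem discrepancy_eq_of_le_of_le {k : ℕ} (hkm : k ≤ m) (hhead : ∀ i < k, t ≤ σ i ^ 2)
    (htail : ∀ i ∈ Ico k m, σ i ^ 2 ≤ t) :
    discrepancy σ m t = k * t + ∑ i ∈ Ico k m, σ i ^ 2 := by
  rw [discrepancy, ← sum_range_add_sum_Ico _ hkm,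
    sum_congr rfl fun i hi => min_eq_right (hhead i (mem_range.1 hi)),
    sum_congr rfl fun i hi => min_eq_left (htail i hi)]
  simp

end Discrepancy

theorem sq_lt_of_succ_mul_sq_add_sum_lt {σ : ℕ → ℝ} {m k : ℕ} {η : ℝ} (hk : 0 < k) (hkm : k < m)
    (h : ((k : ℝ) + 1) * σ k ^ 2 + ∑ i ∈ Ico (k + 1) m, σ i ^ 2 < η) :
    σ k ^ 2 < (η - ∑ i ∈ Ico k m, σ i ^ 2) / k := by
  rw [lt_div_iff₀ (by exact_mod_cast hk), sum_eq_sum_Ico_succ_bot hkm]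
  linarith

theorem discrepancy_root_closed_form_general (m k : ℕ) (σ : ℕ → ℝ)
    (hord : ∀ i, i + 1 < m → σ (i + 1) ≤ σ i) (hnn : ∀ i, i < m → 0 ≤ σ i)
    (η : ℝ) (hηY : η < ∑ i ∈ Finset.range m, (σ i) ^ 2)
    (hk1 : 1 ≤ k) (hkm : k ≤ m)
    (hbk : η ≤ (k : ℝ) * (σ (k - 1)) ^ 2 + ∑ i ∈ Finset.Ico k m, (σ i) ^ 2)
    (hbk1 : (if k < m then ((k : ℝ) + 1) * (σ k) ^ 2 + ∑ i ∈ Finset.Ico (k + 1) m, (σ i) ^ 2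
      else 0) < η) :
    0 < Real.sqrt ((η - ∑ i ∈ Finset.Ico k m, (σ i) ^ 2) / k) ∧
    (∑ i ∈ Finset.range m,
        min ((σ i) ^ 2) (Real.sqrt ((η - ∑ i ∈ Finset.Ico k m, (σ i) ^ 2) / k) ^ 2)) = η ∧
    ∀ lam : ℝ, 0 < lam → (∑ i ∈ Finset.range m, min ((σ i) ^ 2) (lam ^ 2)) = η →
      lam = Real.sqrt ((η - ∑ i ∈ Finset.Ico k m, (σ i) ^ 2) / k) := by
  set T := ∑ i ∈ Ico k m, σ i ^ 2
  set t := (η - T) / k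
  have hk : (0 : ℝ) < k := by exact_mod_cast hk1
  have hanti : AntitoneOn (fun i => σ i ^ 2) (Set.Iio m) := fun i hi j hj hij =>
    pow_le_pow_left₀ (hnn j hj) (antitoneOn_Iio_of_succ_le hord hi hj hij) 2
  have hhead : ∀ i < k, t ≤ σ i ^ 2 := fun i hi =>
    ((div_le_iff₀ hk).2 (by linarith)).trans
      (hanti (hi.trans_le hkm) (show k - 1 < m by omega) (by omega))
  have hsq_lt : k < m → σ k ^ 2 < t := fun hlt =>
    sq_lt_of_succ_mul_sq_add_sum_lt hk1 hlt (by rwa [if_pos hlt] at hbk1)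
  have htail : ∀ i ∈ Ico k m, σ i ^ 2 ≤ t := by
    intro i hi
    obtain ⟨hki, him⟩ := mem_Ico.1 hi
    exact (hanti (hki.trans_lt him) him hki).trans (hsq_lt (hki.trans_lt him)).le
  have ht : 0 < t := by
    rcases hkm.lt_or_eq with hlt | rfl
    · exact (sq_nonneg _).trans_lt (hsq_lt hlt)
    · simp only [lt_irrefl, if_false] at hbk1
      simp only [T, t, Ico_self, sum_empty, sub_zero]
      positivity
  have hroot : discrepancy σ m t = η := by
    rw [discrepancy_eq_of_le_of_le hkm hhead htail, mul_div_cancel₀ _ hk.ne']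
    exact sub_add_cancel η T
  refine ⟨Real.sqrt_pos.2 ht, (Real.sq_sqrt ht.le).symm ▸ hroot, fun lam hlam hlam_root => ?_⟩
  rw [← eq_of_discrepancy_eq (hlam_root.trans_lt hηY) (hlam_root.trans hroot.symm),
    Real.sqrt_sq hlam.le]

/-- Closed-form solution of the discrepancy equation `φ(λ) = η` for the nuclear norm.
Here `σ j` is the `(j+1)`-st singular value (`j = 0, …, m−1`), non-increasing and
nonnegative, `φ(λ) = Σᵢ min(σᵢ², λ²)`, `0 < η < Σᵢ σᵢ²`, and `k` (with `1 ≤ k ≤ m`) is an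
index with `b_{k+1} < η ≤ b_k`, where `b_j = j·σ_j² + Σ_{i=j+1}^m σᵢ²` and `b_{m+1} = 0`.
Then `λ* = √((η − Σ_{i=k+1}^m σᵢ²)/k)` is positive and the unique positive root of
`φ(λ) = η`. -/
theorem discrepancy_root_closed_form (m k : ℕ) (σ : ℕ → ℝ)
    (hord : ∀ i, i + 1 < m → σ (i + 1) ≤ σ i) (hnn : ∀ i, i < m → 0 ≤ σ i)
    (η : ℝ) (hη0 : 0 < η) (hηY : η < ∑ i ∈ Finset.range m, (σ i) ^ 2)
    (hk1 : 1 ≤ k) (hkm : k ≤ m)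
    (hbk : η ≤ (k : ℝ) * (σ (k - 1)) ^ 2 + ∑ i ∈ Finset.Ico k m, (σ i) ^ 2)
    (hbk1 : (if k < m then ((k : ℝ) + 1) * (σ k) ^ 2 + ∑ i ∈ Finset.Ico (k + 1) m, (σ i) ^ 2
      else 0) < η) :
    0 < Real.sqrt ((η - ∑ i ∈ Finset.Ico k m, (σ i) ^ 2) / k) ∧
    (∑ i ∈ Finset.range m,
        min ((σ i) ^ 2) (Real.sqrt ((η - ∑ i ∈ Finset.Ico k m, (σ i) ^ 2) / k) ^ 2)) = η ∧
    ∀ lam : ℝ, 0 < lam → (∑ i ∈ Finset.range m, min ((σ i) ^ 2) (lam ^ 2)) = η →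
      lam = Real.sqrt ((η - ∑ i ∈ Finset.Ico k m, (σ i) ^ 2) / k) :=
  discrepancy_root_closed_form_general m k σ hord hnn η hηY hk1 hkm hbk hbk1
end

section
/- Let σ₁ ≥ σ₂ ≥ … ≥ σ_m ≥ 0 be a non-increasing sequence of nonnegative reals and let 0 < w₁ ≤ w₂ ≤ … ≤ w_m be positive non-decreasing weights. Define ψ(λ) = Σᵢ₌₁^m min(σᵢ², λ²·wᵢ²) for λ ≥ 0. Let η satisfy 0 < η < Σᵢ₌₁^m σᵢ². Define b_j = (σ_j/w_j)²·Σ_{i=1}^j wᵢ² + Σ_{i=j+1}^m σᵢ² for j = 1, …, m and b_{m+1} = 0, and let k be an index with b_{k+1} < η ≤ b_k. Then λ* = √((η − Σ_{i=k+1}^m σᵢ²)/(Σ_{i=1}^k wᵢ²)) is positive and is the unique positive solution of the equation ψ(λ) = η. -/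
/-!
On the interval `t ∈ [(σₖ/wₖ)², (σₖ₋₁/wₖ₋₁)²]` of `t = λ²` the first `k` terms of `ψ` are
`t wᵢ²` and the remaining ones are `σᵢ²`, because the ratios `σᵢ/wᵢ` are non-increasing; so
there `ψ = t·Σᵢ₌₁ᵏ wᵢ² + Σᵢ₌ₖ₊₁ᵐ σᵢ²` is affine, and the bracketing `b_{k+1} < η ≤ b_k` puts
the root of this affine equation inside the interval. Uniqueness holds because `ψ` is strictly
increasing as long as it stays below its supremum `Σᵢ σᵢ²`.
-/

open Finset

/-- The discrepancy `ψ`, written as a function of `t = λ²`. -/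
noncomputable def weightedDiscrepancy {ι : Type*} (s : Finset ι) (σ w : ι → ℝ) (t : ℝ) : ℝ :=
  ∑ i ∈ s, min (σ i ^ 2) (t * w i ^ 2)

theorem AntitoneOn.sq_div {α : Type*} [Preorder α] {s : Set α} {σ w : α → ℝ}
    (hσ : AntitoneOn σ s) (hσ0 : ∀ i ∈ s, 0 ≤ σ i) (hw : MonotoneOn w s)
    (hw0 : ∀ i ∈ s, 0 < w i) : AntitoneOn (fun i => (σ i / w i) ^ 2) s :=
  fun a ha b hb hab => pow_le_pow_left₀ (div_nonneg (hσ0 b hb) (hw0 b hb).le)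
    (div_le_div₀ (hσ0 a ha) (hσ ha hb hab) (hw0 a ha) (hw ha hb hab)) 2

theorem min_sq_mul_sq_eq_right_of_le {a w t : ℝ} (hw : w ≠ 0) (h : t ≤ (a / w) ^ 2) :
    min (a ^ 2) (t * w ^ 2) = t * w ^ 2 :=
  min_eq_right <| by rwa [div_pow, le_div_iff₀ (by positivity)] at h

theorem min_sq_mul_sq_eq_left_of_le {a w t : ℝ} (hw : w ≠ 0) (h : (a / w) ^ 2 ≤ t) :
    min (a ^ 2) (t * w ^ 2) = a ^ 2 :=
  min_eq_left <| by rwa [div_pow, div_le_iff₀ (by positivity)] at h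

section weightedDiscrepancy

variable {ι : Type*} {s : Finset ι} {σ w : ι → ℝ}

theorem weightedDiscrepancy_lt_of_lt (hw : ∀ i ∈ s, w i ≠ 0) {t₁ t₂ : ℝ} (ht : t₁ < t₂)
    (hlt : weightedDiscrepancy s σ w t₁ < ∑ i ∈ s, σ i ^ 2) :
    weightedDiscrepancy s σ w t₁ < weightedDiscrepancy s σ w t₂ := by
  obtain ⟨j, hj, hjlt⟩ := exists_lt_of_sum_lt hlt
  have hj_unsat : t₁ * w j ^ 2 < σ j ^ 2 := by simpa using hjlt
  have hwj : 0 < w j ^ 2 := by have := hw j hj; positivity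
  refine sum_lt_sum (fun i _ => min_le_min_left _ ?_) ⟨j, hj, ?_⟩
  · exact mul_le_mul_of_nonneg_right ht.le (sq_nonneg _)
  · rw [min_eq_right hj_unsat.le]
    exact lt_min hj_unsat (mul_lt_mul_of_pos_right ht hwj)

theorem eq_of_weightedDiscrepancy_eq (hw : ∀ i ∈ s, w i ≠ 0) {t₁ t₂ : ℝ}
    (h : weightedDiscrepancy s σ w t₁ = weightedDiscrepancy s σ w t₂)
    (hlt : weightedDiscrepancy s σ w t₂ < ∑ i ∈ s, σ i ^ 2) : t₁ = t₂ := by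
  rcases lt_trichotomy t₁ t₂ with ht | ht | ht
  · exact absurd h (weightedDiscrepancy_lt_of_lt hw ht (h ▸ hlt)).ne
  · exact ht
  · exact absurd h (weightedDiscrepancy_lt_of_lt hw ht hlt).ne'

end weightedDiscrepancy

theorem weightedDiscrepancy_range_eq {m k : ℕ} {σ w : ℕ → ℝ} {t : ℝ} (hkm : k ≤ m)
    (hw : ∀ i < m, w i ≠ 0) (hhead : ∀ i < k, t ≤ (σ i / w i) ^ 2)
    (htail : ∀ i ∈ Ico k m, (σ i / w i) ^ 2 ≤ t) :
    weightedDiscrepancy (range m) σ w t = t * ∑ i ∈ range k, w i ^ 2 + ∑ i ∈ Ico k m, σ i ^ 2 := by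
  rw [weightedDiscrepancy, ← sum_range_add_sum_Ico _ hkm, mul_sum]
  congr 1
  · refine sum_congr rfl fun i hi => ?_
    have hik := mem_range.1 hi
    exact min_sq_mul_sq_eq_right_of_le (hw i (hik.trans_le hkm)) (hhead i hik)
  · refine sum_congr rfl fun i hi => ?_
    exact min_sq_mul_sq_eq_left_of_le (hw i (mem_Ico.1 hi).2) (htail i hi)

/-- Moving the index `k` from the tail to the head leaves `b_{k+1}` unchanged, since
`(σₖ/wₖ)² wₖ² = σₖ²`. -/
theorem sq_div_mul_sum_range_succ_add_sum_Ico_succ {m k : ℕ} {σ w : ℕ → ℝ} (hkm : k < m)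
    (hw : w k ≠ 0) :
    (σ k / w k) ^ 2 * ∑ i ∈ range (k + 1), w i ^ 2 + ∑ i ∈ Ico (k + 1) m, σ i ^ 2
      = (σ k / w k) ^ 2 * ∑ i ∈ range k, w i ^ 2 + ∑ i ∈ Ico k m, σ i ^ 2 := by
  rw [sum_range_succ, sum_eq_sum_Ico_succ_bot hkm]
  field_simp
  ring

/-- Closed-form solution of the weighted discrepancy equation `ψ(λ) = η`.  Here `σ j`,
`w j` are the `(j+1)`-st singular value and weight (`j = 0, …, m−1`), with `σ`
non-increasing nonnegative and `w` positive non-decreasing,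
`ψ(λ) = Σᵢ min(σᵢ², λ²wᵢ²)`, `0 < η < Σᵢ σᵢ²`, and `k` (with `1 ≤ k ≤ m`) is an index with
`b_{k+1} < η ≤ b_k`, where `b_j = (σ_j/w_j)²·Σ_{i=1}^j wᵢ² + Σ_{i=j+1}^m σᵢ²` and
`b_{m+1} = 0`.  Then `λ* = √((η − Σ_{i=k+1}^m σᵢ²)/(Σ_{i=1}^k wᵢ²))` is positive and is the
unique positive root of `ψ(λ) = η`. -/
theorem weighted_discrepancy_root_closed_form (m k : ℕ) (σ w : ℕ → ℝ)
    (hord : ∀ i, i + 1 < m → σ (i + 1) ≤ σ i) (hnn : ∀ i, i < m → 0 ≤ σ i)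
    (hwpos : ∀ i, i < m → 0 < w i) (hwmono : ∀ i, i + 1 < m → w i ≤ w (i + 1))
    (η : ℝ) (hη0 : 0 < η) (hηY : η < ∑ i ∈ Finset.range m, (σ i) ^ 2)
    (hk1 : 1 ≤ k) (hkm : k ≤ m)
    (hbk : η ≤ (σ (k - 1) / w (k - 1)) ^ 2 * (∑ i ∈ Finset.range k, (w i) ^ 2)
      + ∑ i ∈ Finset.Ico k m, (σ i) ^ 2)
    (hbk1 : (if k < m then
        (σ k / w k) ^ 2 * (∑ i ∈ Finset.range (k + 1), (w i) ^ 2)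
          + ∑ i ∈ Finset.Ico (k + 1) m, (σ i) ^ 2
      else 0) < η) :
    0 < Real.sqrt ((η - ∑ i ∈ Finset.Ico k m, (σ i) ^ 2) / (∑ i ∈ Finset.range k, (w i) ^ 2)) ∧
    (∑ i ∈ Finset.range m, min ((σ i) ^ 2)
        (Real.sqrt ((η - ∑ i ∈ Finset.Ico k m, (σ i) ^ 2)
            / (∑ i ∈ Finset.range k, (w i) ^ 2)) ^ 2 * (w i) ^ 2)) = η ∧
    ∀ lam : ℝ, 0 < lam →
      (∑ i ∈ Finset.range m, min ((σ i) ^ 2) (lam ^ 2 * (w i) ^ 2)) = η →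
      lam = Real.sqrt ((η - ∑ i ∈ Finset.Ico k m, (σ i) ^ 2)
        / (∑ i ∈ Finset.range k, (w i) ^ 2)) := by
  set T := ∑ i ∈ Ico k m, σ i ^ 2
  set W := ∑ i ∈ range k, w i ^ 2
  have hw : ∀ i < m, w i ≠ 0 := fun i hi => (hwpos i hi).ne'
  have hW : 0 < W := sum_pos (fun i hi => pow_pos (hwpos i ((mem_range.1 hi).trans_le hkm)) 2)
    (nonempty_range_iff.2 (by omega))
  have hρ : AntitoneOn (fun i => (σ i / w i) ^ 2) (Set.Iio m) :=
    (antitoneOn_of_succ_le Set.ordConnected_Iio fun i _ _ hi => hord i hi).sq_div hnn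
      (monotoneOn_of_le_succ Set.ordConnected_Iio fun i _ _ hi => hwmono i hi) hwpos
  have hgap : k < m → (σ k / w k) ^ 2 * W < η - T := fun hk => by
    rw [if_pos hk, sq_div_mul_sum_range_succ_add_sum_Ico_succ hk (hw k hk)] at hbk1
    exact lt_sub_iff_add_lt.2 hbk1
  have hT : T < η := by
    by_cases hk : k < m
    · exact sub_pos.1 ((mul_nonneg (sq_nonneg _) hW.le).trans_lt (hgap hk))
    · simpa [T, Ico_eq_empty_of_le (not_lt.1 hk)] using hη0
  have hhead : ∀ i < k, (η - T) / W ≤ (σ i / w i) ^ 2 := fun i hi =>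
    ((div_le_iff₀ hW).2 (sub_le_iff_le_add.2 hbk)).trans
      (hρ (Set.mem_Iio.2 (by omega)) (Set.mem_Iio.2 (by omega)) (by omega))
  have htail : ∀ i ∈ Ico k m, (σ i / w i) ^ 2 ≤ (η - T) / W := fun i hi => by
    obtain ⟨hki, him⟩ := mem_Ico.1 hi
    exact (hρ (by simpa using hki.trans_lt him) (by simpa using him) hki).trans
      ((lt_div_iff₀ hW).2 (hgap (hki.trans_lt him))).le
  have hval : weightedDiscrepancy (range m) σ w ((η - T) / W) = η := by
    rw [weightedDiscrepancy_range_eq hkm hw hhead htail, div_mul_cancel₀ _ hW.ne']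
    ring
  have hsq : Real.sqrt ((η - T) / W) ^ 2 = (η - T) / W :=
    Real.sq_sqrt (div_pos (sub_pos.2 hT) hW).le
  refine ⟨Real.sqrt_pos.2 (div_pos (sub_pos.2 hT) hW), by rw [hsq]; exact hval,
    fun lam hlam hroot => ?_⟩
  have hlam_sq : lam ^ 2 = (η - T) / W :=
    eq_of_weightedDiscrepancy_eq (fun i hi => hw i (mem_range.1 hi)) (hroot.trans hval.symm)
      (by rw [hval]; exact hηY)
  rw [← hlam_sq, Real.sqrt_sq hlam.le]
end

section
/- Let Y be an m×n real matrix (m ≤ n) with singular value decomposition Y = Σᵢ₌₁^m σ_{Y,i}·uᵢvᵢᵀ, where u₁,…,u_m and v₁,…,v_m are orthonormal families in ℝ^m and ℝ^n respectively and σ_{Y,1} ≥ … ≥ σ_{Y,m} ≥ 0, and let λ > 0. Then the matrix X̂ = Σᵢ₌₁^m max(σ_{Y,i} − λ, 0)·uᵢvᵢᵀ is a global minimizer over all m×n real matrices X of ‖X‖_* + (1/(2λ))·‖X − Y‖_F², where ‖X‖_* = Σᵢ₌₁^m σ_{X,i} is the nuclear norm of X. -/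
open Matrix
open scoped Matrix.Norms.L2Operator MatrixOrder RealInnerProductSpace

section NuclearNorm

variable {m n : Type*} [Fintype m] [Fintype n] [DecidableEq n]

/-- Sums over all `card n` eigenvalues of `Xᴴ * X`, so that neither sorting nor `m ≤ n` is
needed. -/
noncomputable def nuclearNorm (X : Matrix m n ℝ) : ℝ :=
  ∑ j, √((isHermitian_conjTranspose_mul_self X).eigenvalues j)

lemma nuclearNorm_nonneg (X : Matrix m n ℝ) : 0 ≤ nuclearNorm X :=
  Finset.sum_nonneg fun _ _ => Real.sqrt_nonneg _

omit [Fintype m] in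
lemma Matrix.IsHermitian.trace_cfc {A : Matrix n n ℝ} (hA : A.IsHermitian) (f : ℝ → ℝ) :
    (cfc f A).trace = ∑ j, f (hA.eigenvalues j) := by
  rw [hA.cfc_eq, IsHermitian.cfc, Unitary.conjStarAlgAut_apply, trace_mul_cycle,
    Unitary.coe_star_mul_self, one_mul, trace_diagonal]
  simp

lemma nuclearNorm_eq_trace_sqrt (X : Matrix m n ℝ) :
    nuclearNorm X = (CFC.sqrt (Xᴴ * X)).trace := by
  have hX := posSemidef_conjTranspose_mul_self X
  rw [CFC.sqrt_eq_cfc, cfc_nnreal_eq_real _ _ hX.nonneg, hX.isHermitian.trace_cfc, nuclearNorm]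
  refine Finset.sum_congr rfl fun j _ => ?_
  simp only [Real.coe_sqrt, Real.coe_toNNReal']
  rw [max_eq_left (hX.eigenvalues_nonneg j)]

lemma nuclearNorm_eq_trace_of_mul_self {X : Matrix m n ℝ} {S : Matrix n n ℝ}
    (hS : S.PosSemidef) (hSS : S * S = Xᴴ * X) : nuclearNorm X = S.trace := by
  rw [nuclearNorm_eq_trace_sqrt, CFC.sqrt_unique hSS hS.nonneg]

omit [Fintype m] in
lemma trace_eq_sum_inner_toEuclideanLin (A : Matrix n n ℝ)
    (b : OrthonormalBasis n ℝ (EuclideanSpace ℝ n)) :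
    A.trace = ∑ j, ⟪b j, toEuclideanLin A (b j)⟫ := by
  rw [← LinearMap.trace_eq_sum_inner, toEuclideanLin_eq_toLin_orthonormal, trace_toLin_eq]

variable [DecidableEq m]

lemma inner_toEuclideanLin_toEuclideanLin (A B : Matrix m n ℝ) (x y : EuclideanSpace ℝ n) :
    ⟪toEuclideanLin A x, toEuclideanLin B y⟫ = ⟪x, toEuclideanLin (Aᴴ * B) y⟫ := by
  rw [toLpLin_mul_same, LinearMap.comp_apply, toEuclideanLin_conjTranspose_eq_adjoint,
    LinearMap.adjoint_inner_right]

lemma norm_toEuclideanLin_eigenvectorBasis (X : Matrix m n ℝ) (j : n) :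
    ‖toEuclideanLin X ((isHermitian_conjTranspose_mul_self X).eigenvectorBasis j)‖ =
      √((isHermitian_conjTranspose_mul_self X).eigenvalues j) := by
  set hX := isHermitian_conjTranspose_mul_self X
  rw [norm_eq_sqrt_real_inner, inner_toEuclideanLin_toEuclideanLin, toLpLin_apply,
    hX.mulVec_eigenvectorBasis, WithLp.toLp_smul, WithLp.toLp_ofLp, real_inner_smul_right,
    real_inner_self_eq_norm_sq, hX.eigenvectorBasis.norm_eq_one, one_pow, mul_one]

lemma trace_conjTranspose_mul_le_l2_opNorm_mul_nuclearNorm (W X : Matrix m n ℝ) :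
    (Wᴴ * X).trace ≤ ‖W‖ * nuclearNorm X := by
  set f := (isHermitian_conjTranspose_mul_self X).eigenvectorBasis
  rw [trace_eq_sum_inner_toEuclideanLin _ f, nuclearNorm, Finset.mul_sum]
  refine Finset.sum_le_sum fun j _ => ?_
  calc ⟪f j, toEuclideanLin (Wᴴ * X) (f j)⟫
      = ⟪toEuclideanLin W (f j), toEuclideanLin X (f j)⟫ :=
        (inner_toEuclideanLin_toEuclideanLin W X _ _).symm
    _ ≤ ‖toEuclideanLin W (f j)‖ * ‖toEuclideanLin X (f j)‖ := real_inner_le_norm _ _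
    _ ≤ ‖W‖ * ‖toEuclideanLin X (f j)‖ := by
        gcongr
        calc _ ≤ ‖W‖ * ‖f j‖ := l2_opNorm_mulVec W (f j)
          _ = ‖W‖ := by rw [f.norm_eq_one, mul_one]
    _ = _ := by rw [norm_toEuclideanLin_eigenvectorBasis]

end NuclearNorm

lemma Monotone.eq_zero_of_card_ne_zero_le {n m : ℕ} {f : Fin n → ℝ} (hf : Monotone f)
    (hf0 : ∀ k, 0 ≤ f k) (hcard : Fintype.card {k // f k ≠ 0} ≤ m) {j : Fin n}
    (hj : (j : ℕ) + m < n) : f j = 0 := by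
  by_contra hne
  have hsub : Finset.Ici j ⊆ Finset.univ.filter (f · ≠ 0) := fun k hk => by
    simp only [Finset.mem_filter, Finset.mem_univ, true_and]
    exact (((hf0 j).lt_of_ne' hne).trans_le (hf (Finset.mem_Ici.mp hk))).ne'
  have := Finset.card_le_card hsub
  rw [Fin.card_Ici, ← Fintype.card_subtype] at this
  omega

lemma card_eigenvalues_conjTranspose_mul_self_ne_zero_le {m n : ℕ}
    (X : Matrix (Fin m) (Fin n) ℝ) :
    Fintype.card {j // (isHermitian_conjTranspose_mul_self X).eigenvalues j ≠ 0} ≤ m := by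
  rw [← IsHermitian.rank_eq_card_non_zero_eigs, rank_conjTranspose_mul_self]
  exact rank_le_height X

/-- `Xᵀ * X` has rank at most `m`, so the `n - m` smallest eigenvalues, which `singularValues`
drops, vanish. -/
lemma sum_singularValues_eq_nuclearNorm {m n : ℕ} (hmn : m ≤ n)
    (X : Matrix (Fin m) (Fin n) ℝ) : ∑ i, singularValues hmn X i = nuclearNorm X := by
  set ev := (isHermitian_conjTranspose_mul_self X).eigenvalues
  set τ := Tuple.sort ev
  have hzero : ∀ j : Fin n, (j : ℕ) + m < n → ev (τ j) = 0 := fun j hj =>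
    (Tuple.monotone_sort ev).eq_zero_of_card_ne_zero_le
      (fun k => (posSemidef_conjTranspose_mul_self X).eigenvalues_nonneg _)
      ((Fintype.card_congr (τ.subtypeEquiv fun _ => Iff.rfl)).trans_le
        (card_eigenvalues_conjTranspose_mul_self_ne_zero_le X)) hj
  calc ∑ i, singularValues hmn X i = ∑ j, √(ev (τ j)) := by
        refine Fintype.sum_of_injective _ (Fin.rev_injective.comp (Fin.castLE_injective hmn)) _ _
          (fun j hj => ?_) fun i => rfl
        rw [hzero j, Real.sqrt_zero]
        by_contra! hle
        refine hj ⟨⟨n - 1 - j, by omega⟩, Fin.ext ?_⟩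
        simp only [Function.comp_apply, Fin.val_rev, Fin.val_castLE]
        omega
    _ = nuclearNorm X := Equiv.sum_comp τ (fun j => √(ev j))

section SingularValueDecomposition

variable {r m n : Type*} [Fintype r] [DecidableEq r]

lemma of_sum_mul_eq_conjTranspose_mul_diagonal_mul (u : r → m → ℝ) (v : r → n → ℝ)
    (c : r → ℝ) :
    of (fun j k => ∑ i, c i * (u i j * v i k)) = (of u)ᴴ * diagonal c * of v := by
  ext j k
  rw [mul_apply]
  simp only [mul_diagonal, conjTranspose_apply, of_apply, star_trivial]
  exact Finset.sum_congr rfl fun i _ => by ring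

omit [Fintype r] in
lemma of_mul_conjTranspose_eq_one [Fintype n] {v : r → n → ℝ}
    (hv : ∀ i j, ∑ k, v i k * v j k = if i = j then (1 : ℝ) else 0) :
    of v * (of v)ᴴ = 1 := by
  ext i j
  simp [mul_apply, hv, one_apply]

variable [Fintype m] [Fintype n] {U : Matrix r m ℝ} {V : Matrix r n ℝ}

omit [Fintype n] in
lemma conjTranspose_mul_diagonal_mul_conjTranspose_mul (hU : U * Uᴴ = 1) (a b : r → ℝ) :
    (Uᴴ * diagonal a * V)ᴴ * (Uᴴ * diagonal b * V) = Vᴴ * diagonal (a * b) * V := by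
  simp only [conjTranspose_mul, conjTranspose_conjTranspose, diagonal_conjTranspose,
    star_trivial, Matrix.mul_assoc]
  rw [← Matrix.mul_assoc U, hU, Matrix.one_mul, ← Matrix.mul_assoc (diagonal a),
    diagonal_mul_diagonal]
  rfl

lemma trace_conjTranspose_mul_diagonal_mul (hV : V * Vᴴ = 1) (c : r → ℝ) :
    (Vᴴ * diagonal c * V).trace = ∑ i, c i := by
  rw [trace_mul_cycle, hV, Matrix.one_mul, trace_diagonal]

variable [DecidableEq m] [DecidableEq n]

lemma l2_opNorm_le_one_of_mul_conjTranspose_eq_one {A : Matrix r n ℝ} (hA : A * Aᴴ = 1) :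
    ‖A‖ ≤ 1 := by
  have h : ‖A‖ * ‖A‖ ≤ 1 := by
    rw [← l2_opNorm_conjTranspose, ← l2_opNorm_conjTranspose_mul_self,
      conjTranspose_conjTranspose, hA, ← l2_opNorm_toEuclideanCLM, map_one]
    exact ContinuousLinearMap.norm_id_le
  nlinarith [norm_nonneg A]

lemma l2_opNorm_conjTranspose_mul_diagonal_mul_le (hU : U * Uᴴ = 1) (hV : V * Vᴴ = 1)
    {c : r → ℝ} {C : ℝ} (hC : 0 ≤ C) (hc : ∀ i, |c i| ≤ C) : ‖Uᴴ * diagonal c * V‖ ≤ C := by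
  calc ‖Uᴴ * diagonal c * V‖ ≤ ‖Uᴴ‖ * ‖diagonal c‖ * ‖V‖ := by
        grw [l2_opNorm_mul, l2_opNorm_mul]
    _ ≤ 1 * C * 1 := by
        gcongr
        · rw [l2_opNorm_conjTranspose]
          exact l2_opNorm_le_one_of_mul_conjTranspose_eq_one hU
        · rw [l2_opNorm_diagonal]
          exact (pi_norm_le_iff_of_nonneg hC).mpr hc
        · exact l2_opNorm_le_one_of_mul_conjTranspose_eq_one hV
    _ = C := by ring

omit [DecidableEq m] in
lemma nuclearNorm_conjTranspose_mul_diagonal_mul (hU : U * Uᴴ = 1) (hV : V * Vᴴ = 1)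
    {c : r → ℝ} (hc : 0 ≤ c) : nuclearNorm (Uᴴ * diagonal c * V) = ∑ i, c i := by
  have hS := (PosSemidef.diagonal hc).conjTranspose_mul_mul_same V
  have hSS : (Vᴴ * diagonal c * V) * (Vᴴ * diagonal c * V)
      = (Uᴴ * diagonal c * V)ᴴ * (Uᴴ * diagonal c * V) := by
    calc (Vᴴ * diagonal c * V) * (Vᴴ * diagonal c * V)
        = (Vᴴ * diagonal c * V)ᴴ * (Vᴴ * diagonal c * V) := by rw [hS.isHermitian.eq]
      _ = Vᴴ * diagonal (c * c) * V := conjTranspose_mul_diagonal_mul_conjTranspose_mul hV c c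
      _ = _ := (conjTranspose_mul_diagonal_mul_conjTranspose_mul hU c c).symm
  rw [nuclearNorm_eq_trace_of_mul_self hS hSS, trace_conjTranspose_mul_diagonal_mul hV]

end SingularValueDecomposition

lemma sub_max_sub_zero {α : Type*} [AddCommGroup α] [LinearOrder α] [IsOrderedAddMonoid α]
    (a b : α) : a - max (a - b) 0 = min a b := by
  rcases le_total a b with h | h
  · rw [max_eq_right (sub_nonpos.mpr h), min_eq_left h, sub_zero]
  · rw [max_eq_left (sub_nonneg.mpr h), min_eq_right h, sub_sub_cancel]

lemma min_mul_max_sub_zero {α : Type*} [Ring α] [LinearOrder α] [IsOrderedAddMonoid α]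
    (a b : α) : min a b * max (a - b) 0 = b * max (a - b) 0 := by
  rcases le_total a b with h | h
  · rw [max_eq_right (sub_nonpos.mpr h), mul_zero, mul_zero]
  · rw [min_eq_right h]

section Frobenius

variable {m n : ℕ}

lemma frobSq_eq_trace (A : Matrix (Fin m) (Fin n) ℝ) : frobSq A = (Aᴴ * A).trace := by
  rw [frobSq, trace, Finset.sum_comm]
  simp [mul_apply, sq]

lemma frobSq_nonneg (A : Matrix (Fin m) (Fin n) ℝ) : 0 ≤ frobSq A :=
  Finset.sum_nonneg fun _ _ => Finset.sum_nonneg fun _ _ => sq_nonneg _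

lemma frobSq_sub (A B : Matrix (Fin m) (Fin n) ℝ) :
    frobSq (A - B) = frobSq A - 2 * (Bᴴ * A).trace + frobSq B := by
  have hBA : (Aᴴ * B).trace = (Bᴴ * A).trace := by
    rw [← trace_transpose, transpose_mul, ← conjTranspose_eq_transpose_of_trivial,
      ← conjTranspose_eq_transpose_of_trivial, conjTranspose_conjTranspose]
  simp only [frobSq_eq_trace, conjTranspose_sub, Matrix.sub_mul, Matrix.mul_sub, trace_sub, hBA]
  ring

lemma frobSq_sub_comm (A B : Matrix (Fin m) (Fin n) ℝ) : frobSq (A - B) = frobSq (B - A) := by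
  simp only [frobSq, Matrix.sub_apply]
  exact Finset.sum_congr rfl fun i _ => Finset.sum_congr rfl fun j _ => by ring

end Frobenius

lemma nuclearNorm_add_frobSq_sub_le_of_subgradient {m n : ℕ} {lam : ℝ} (hlam : 0 < lam)
    {Xhat Y : Matrix (Fin m) (Fin n) ℝ} (hnorm : ‖Y - Xhat‖ ≤ lam)
    (htrace : ((Y - Xhat)ᴴ * Xhat).trace = lam * nuclearNorm Xhat) (X : Matrix (Fin m) (Fin n) ℝ) :
    nuclearNorm Xhat + 1 / (2 * lam) * frobSq (Xhat - Y)
      ≤ nuclearNorm X + 1 / (2 * lam) * frobSq (X - Y) := by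
  have hdual : ((Y - Xhat)ᴴ * X).trace ≤ lam * nuclearNorm X :=
    (trace_conjTranspose_mul_le_l2_opNorm_mul_nuclearNorm _ X).trans
      (mul_le_mul_of_nonneg_right hnorm (nuclearNorm_nonneg X))
  have hexpand : frobSq (X - Y) = frobSq (X - Xhat)
      - 2 * (((Y - Xhat)ᴴ * X).trace - lam * nuclearNorm Xhat) + frobSq (Xhat - Y) := by
    rw [← sub_sub_sub_cancel_right X Y Xhat, frobSq_sub, Matrix.mul_sub, trace_sub, htrace,
      frobSq_sub_comm Y]
  rw [hexpand]
  have hF := frobSq_nonneg (X - Xhat)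
  field_simp
  nlinarith

theorem svt_minimizes_nuclear_norm_problem_general {m n : ℕ} (hmn : m ≤ n)
    (u : Fin m → Fin m → ℝ) (v : Fin m → Fin n → ℝ)
    (hu : ∀ i j, ∑ k, u i k * u j k = if i = j then (1 : ℝ) else 0)
    (hv : ∀ i j, ∑ k, v i k * v j k = if i = j then (1 : ℝ) else 0)
    (σY : Fin m → ℝ) (hnn : ∀ i, 0 ≤ σY i)
    (Y : Matrix (Fin m) (Fin n) ℝ)
    (hY : Y = Matrix.of fun j k => ∑ i, σY i * (u i j * v i k))
    (lam : ℝ) (hlam : 0 < lam)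
    (Xhat : Matrix (Fin m) (Fin n) ℝ)
    (hXhat : Xhat = Matrix.of fun j k => ∑ i, max (σY i - lam) 0 * (u i j * v i k)) :
    ∀ X : Matrix (Fin m) (Fin n) ℝ,
      (∑ i, singularValues hmn Xhat i) + (1 / (2 * lam)) * frobSq (Xhat - Y)
        ≤ (∑ i, singularValues hmn X i) + (1 / (2 * lam)) * frobSq (X - Y) := by
  intro X
  have hU := of_mul_conjTranspose_eq_one hu
  have hV := of_mul_conjTranspose_eq_one hv
  simp only [sum_singularValues_eq_nuclearNorm]
  rw [of_sum_mul_eq_conjTranspose_mul_diagonal_mul] at hY hXhat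
  have hres : Y - Xhat = (of u)ᴴ * diagonal (fun i => min (σY i) lam) * of v := by
    simp only [← sub_max_sub_zero _ lam]
    rw [hY, hXhat, ← diagonal_sub σY, Matrix.mul_sub, Matrix.sub_mul]
  refine nuclearNorm_add_frobSq_sub_le_of_subgradient hlam ?_ ?_ X
  · rw [hres]
    exact l2_opNorm_conjTranspose_mul_diagonal_mul_le hU hV hlam.le fun i =>
      abs_le.mpr ⟨by linarith [le_min (hnn i) hlam.le], min_le_right _ _⟩
  · rw [hres, hXhat, conjTranspose_mul_diagonal_mul_conjTranspose_mul hU,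
      trace_conjTranspose_mul_diagonal_mul hV,
      nuclearNorm_conjTranspose_mul_diagonal_mul hU hV (c := fun i => max (σY i - lam) 0)
        fun i => le_max_right _ _, Finset.mul_sum]
    exact Finset.sum_congr rfl fun i _ => min_mul_max_sub_zero _ _

/-- (Cai–Candès–Shen) If `Y = Σᵢ σ_{Y,i} uᵢvᵢᵀ` is an SVD of `Y` and `λ > 0`, then the
singular value thresholding `X̂ = Σᵢ max(σ_{Y,i} − λ, 0) uᵢvᵢᵀ` is a global minimizer of
the nuclear norm problem `min_X ‖X‖_* + (1/(2λ))‖X − Y‖_F²`. -/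
theorem svt_minimizes_nuclear_norm_problem {m n : ℕ} (hmn : m ≤ n)
    (u : Fin m → Fin m → ℝ) (v : Fin m → Fin n → ℝ)
    (hu : ∀ i j, ∑ k, u i k * u j k = if i = j then (1 : ℝ) else 0)
    (hv : ∀ i j, ∑ k, v i k * v j k = if i = j then (1 : ℝ) else 0)
    (σY : Fin m → ℝ) (hord : Antitone σY) (hnn : ∀ i, 0 ≤ σY i)
    (Y : Matrix (Fin m) (Fin n) ℝ)
    (hY : Y = Matrix.of fun j k => ∑ i, σY i * (u i j * v i k))
    (lam : ℝ) (hlam : 0 < lam)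
    (Xhat : Matrix (Fin m) (Fin n) ℝ)
    (hXhat : Xhat = Matrix.of fun j k => ∑ i, max (σY i - lam) 0 * (u i j * v i k)) :
    ∀ X : Matrix (Fin m) (Fin n) ℝ,
      (∑ i, singularValues hmn Xhat i) + (1 / (2 * lam)) * frobSq (Xhat - Y)
        ≤ (∑ i, singularValues hmn X i) + (1 / (2 * lam)) * frobSq (X - Y) :=
  svt_minimizes_nuclear_norm_problem_general hmn u v hu hv σY hnn Y hY lam hlam Xhat hXhat
end

section
/- Let σ ≥ 0 and λ > 0 be real numbers, and consider the function h(x) = [x ≠ 0] + (1/(2λ))·(x − σ)² on ℝ, where [x ≠ 0] equals 1 if x ≠ 0 and 0 if x = 0. Then: if σ > √(2λ), the point x = σ is a global minimizer of h; if σ < √(2λ), the point x = 0 is a global minimizer of h; and if σ = √(2λ), both x = 0 and x = σ are global minimizers of h. -/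
/-!
Every `x ≠ 0` pays the full penalty `1 = h σ` (when `σ ≠ 0`), while `x = 0` costs
`σ² / (2λ)`. Hence the minimum of `h` is attained at `0` or at `σ`, whichever is cheaper,
and comparing `σ² / (2λ)` with `1` is comparing `σ` with `√(2λ)`.
-/

noncomputable def hardThresholdObjective (c σ x : ℝ) : ℝ :=
  (if x ≠ 0 then 1 else 0) + c * (x - σ) ^ 2

namespace hardThresholdObjective

variable {c σ : ℝ}

theorem apply_zero : hardThresholdObjective c σ 0 = c * σ ^ 2 := by
  simp [hardThresholdObjective]

theorem apply_self (hσ : σ ≠ 0) : hardThresholdObjective c σ σ = 1 := by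
  simp [hardThresholdObjective, hσ]

theorem one_le_apply (hc : 0 ≤ c) {x : ℝ} (hx : x ≠ 0) : 1 ≤ hardThresholdObjective c σ x := by
  simp only [hardThresholdObjective, if_pos hx]
  have : 0 ≤ c * (x - σ) ^ 2 := by positivity
  linarith

theorem apply_zero_le (hc : 0 ≤ c) (hσ : c * σ ^ 2 ≤ 1) (x : ℝ) :
    hardThresholdObjective c σ 0 ≤ hardThresholdObjective c σ x := by
  rcases eq_or_ne x 0 with rfl | hx
  · exact le_rfl
  · exact apply_zero.trans_le (hσ.trans (one_le_apply hc hx))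

theorem apply_self_le (hc : 0 ≤ c) (hσ₀ : σ ≠ 0) (hσ : 1 ≤ c * σ ^ 2) (x : ℝ) :
    hardThresholdObjective c σ σ ≤ hardThresholdObjective c σ x := by
  rw [apply_self hσ₀]
  rcases eq_or_ne x 0 with rfl | hx
  · exact hσ.trans_eq apply_zero.symm
  · exact one_le_apply hc hx

end hardThresholdObjective

theorem one_div_mul_sq_le_one_iff {a σ : ℝ} (ha : 0 < a) (hσ : 0 ≤ σ) :
    1 / a * σ ^ 2 ≤ 1 ↔ σ ≤ √a := by
  rw [one_div_mul_eq_div, div_le_one ha, Real.le_sqrt hσ ha.le]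

theorem one_le_one_div_mul_sq_iff {a σ : ℝ} (ha : 0 < a) (hσ : 0 ≤ σ) :
    1 ≤ 1 / a * σ ^ 2 ↔ √a ≤ σ := by
  rw [one_div_mul_eq_div, one_le_div ha, Real.sqrt_le_left hσ]

/-- The scalar hard-thresholding subproblem: for `σ ≥ 0` and `λ > 0`, consider
`h(x) = [x ≠ 0] + (1/(2λ))(x − σ)²`.  If `σ > √(2λ)` then `x = σ` is a global minimizer;
if `σ < √(2λ)` then `x = 0` is a global minimizer; if `σ = √(2λ)` both are. -/
theorem scalar_hard_threshold_minimizer (σ lam : ℝ) (hσ : 0 ≤ σ) (hlam : 0 < lam)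
    (h : ℝ → ℝ)
    (hdef : h = fun x => (if x ≠ 0 then (1 : ℝ) else 0) + (1 / (2 * lam)) * (x - σ) ^ 2) :
    (Real.sqrt (2 * lam) < σ → ∀ x : ℝ, h σ ≤ h x) ∧
    (σ < Real.sqrt (2 * lam) → ∀ x : ℝ, h 0 ≤ h x) ∧
    (σ = Real.sqrt (2 * lam) → (∀ x : ℝ, h 0 ≤ h x) ∧ (∀ x : ℝ, h σ ≤ h x)) := by
  obtain rfl : h = hardThresholdObjective (1 / (2 * lam)) σ := hdef
  have h2lam : 0 < 2 * lam := by positivity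
  have hc : 0 ≤ 1 / (2 * lam) := by positivity
  have hsqrt : 0 < √(2 * lam) := Real.sqrt_pos.2 h2lam
  refine ⟨fun hgt => ?_, fun hlt => ?_, fun heq => ⟨?_, ?_⟩⟩
  · exact hardThresholdObjective.apply_self_le hc (hsqrt.trans hgt).ne'
      ((one_le_one_div_mul_sq_iff h2lam hσ).2 hgt.le)
  · exact hardThresholdObjective.apply_zero_le hc
      ((one_div_mul_sq_le_one_iff h2lam hσ).2 hlt.le)
  · exact hardThresholdObjective.apply_zero_le hc
      ((one_div_mul_sq_le_one_iff h2lam hσ).2 heq.le)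
  · exact hardThresholdObjective.apply_self_le hc (heq ▸ hsqrt).ne'
      ((one_le_one_div_mul_sq_iff h2lam hσ).2 heq.ge)
end
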